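/- Let R be an associative unital ring. Then every nonzero cyclic singular left R-module has a nonzero socle if and only if every singular left R-module is semi-Artinian. -/

import Mathlib

universe u v w

/-- The socle of a module: the sum (supremum) of all simple submodules. -/
def moduleSocle (R : Type u) [Ring R] (M : Type v) [AddCommGroup M] [Module R M] :
    Submodule R M :=
  sSup {S : Submodule R M | IsSimpleModule R S}

/-- A submodule `N` of `M` is essential if `N ⊓ L ≠ ⊥` for every nonzero submodule `L` of `M`. -/
def IsEssentialSubmodule {R : Type u} [Ring R] {M : Type v} [AddCommGroup M] [Module R M]
    (N : Submodule R M) : Prop :=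
  ∀ L : Submodule R M, L ≠ ⊥ → N ⊓ L ≠ ⊥

/-- A module is semi-Artinian if every nonzero quotient has a nonzero socle. -/
def IsSemiartinianModule (R : Type u) [Ring R] (M : Type v) [AddCommGroup M] [Module R M] :
    Prop :=
  ∀ N : Submodule R M, N ≠ ⊤ → moduleSocle R (M ⧸ N) ≠ ⊥

/-- A module is singular if the annihilator of each of its elements is an essential left
ideal of `R`. -/
def IsSingularModule (R : Type u) [Ring R] (M : Type v) [AddCommGroup M] [Module R M] : Prop :=
  ∀ m : M, IsEssentialSubmodule (LinearMap.ker (LinearMap.toSpanSingleton R M m))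

/-- Property (◇): every finitely generated left `R`-module containing an essential simple
submodule is Artinian. -/
def HasPropertyDiamond (R : Type u) [Ring R] : Prop :=
  ∀ (M : Type v) [AddCommGroup M] [Module R M], Module.Finite R M →
    (∃ S : Submodule R M, IsSimpleModule R S ∧ IsEssentialSubmodule S) → IsArtinian R M

/-- A left C-ring: every nonzero cyclic singular left module has a nonzero socle. -/
def IsLeftCRing (R : Type u) [Ring R] : Prop :=
  ∀ (M : Type v) [AddCommGroup M] [Module R M], Nontrivial M →
    (∃ m : M, Submodule.span R {m} = ⊤) → IsSingularModule R M →
    moduleSocle R M ≠ ⊥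

/-- The Dickson torsion part of a module: the sum of all its semi-Artinian submodules. -/
def dicksonTorsionPart (R : Type u) [Ring R] (A : Type v) [AddCommGroup A] [Module R A] :
    Submodule R A :=
  sSup {N : Submodule R A | IsSemiartinianModule R N}

section Singular

variable {R : Type u} [Ring R] {M : Type v} [AddCommGroup M] [Module R M]

theorem moduleSocle_ne_bot_iff :
    moduleSocle R M ≠ ⊥ ↔ ∃ S : Submodule R M, IsSimpleModule R S := by
  simp only [moduleSocle, ne_eq, sSup_eq_bot, Set.mem_ofPred_eq, not_forall, exists_prop]
  refine exists_congr fun S ↦ and_iff_left_of_imp fun hS ↦ ?_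
  exact (Submodule.nontrivial_iff_ne_bot (p := S)).mp (IsSimpleModule.nontrivial R S)

theorem moduleSocle_ne_bot_of_injective {N : Type w} [AddCommGroup N] [Module R N]
    (f : M →ₗ[R] N) (hf : Function.Injective f) (h : moduleSocle R M ≠ ⊥) :
    moduleSocle R N ≠ ⊥ := by
  obtain ⟨S, hS⟩ := moduleSocle_ne_bot_iff.mp h
  exact moduleSocle_ne_bot_iff.mpr
    ⟨S.map f, IsSimpleModule.congr (Submodule.equivMapOfInjective f hf S).symm⟩

theorem IsEssentialSubmodule.mono {N N' : Submodule R M} (hN : IsEssentialSubmodule N)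
    (h : N ≤ N') : IsEssentialSubmodule N' :=
  fun L hL hbot ↦ hN L hL (le_bot_iff.mp (hbot ▸ inf_le_inf_right L h))

theorem IsSingularModule.submodule (h : IsSingularModule R M) (P : Submodule R M) :
    IsSingularModule R P := by
  intro m
  have hker : LinearMap.ker (LinearMap.toSpanSingleton R M m) =
      LinearMap.ker (LinearMap.toSpanSingleton R P m) := by
    ext r
    simp [Subtype.ext_iff]
  exact hker ▸ h m

theorem IsSingularModule.quotient (h : IsSingularModule R M) (N : Submodule R M) :
    IsSingularModule R (M ⧸ N) := by
  intro m
  obtain ⟨x, rfl⟩ := Submodule.Quotient.mk_surjective N m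
  refine (h x).mono fun r hr ↦ ?_
  simp only [LinearMap.mem_ker, LinearMap.toSpanSingleton_apply] at hr ⊢
  rw [← Submodule.Quotient.mk_smul, hr, Submodule.Quotient.mk_zero]

theorem IsLeftCRing.moduleSocle_ne_bot (hC : IsLeftCRing.{u, v} R) [Nontrivial M]
    (hsing : IsSingularModule R M) : moduleSocle R M ≠ ⊥ := by
  obtain ⟨m, hm⟩ := exists_ne (0 : M)
  set P := Submodule.span R {m}
  have hmP : m ∈ P := Submodule.mem_span_singleton_self m
  have hPnt : Nontrivial P := ⟨⟨⟨m, hmP⟩, 0, by simpa [Subtype.ext_iff] using hm⟩⟩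
  have hPcyc : Submodule.span R {(⟨m, hmP⟩ : P)} = ⊤ :=
    (LinearMap.submoduleOf_span_singleton_of_mem P hmP).symm.trans (Submodule.submoduleOf_self P)
  exact moduleSocle_ne_bot_of_injective P.subtype P.injective_subtype
    (hC P hPnt ⟨_, hPcyc⟩ (hsing.submodule P))

end Singular

/-- `R` is a left C-ring iff every singular left `R`-module is semi-Artinian. -/
theorem stmt14 (R : Type u) [Ring R] :
    IsLeftCRing.{u, v} R ↔
      ∀ (M : Type v) [AddCommGroup M] [Module R M], IsSingularModule R M →
        IsSemiartinianModule R M := by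
  constructor
  · intro hC M _ _ hsing N hN
    have : Nontrivial (M ⧸ N) := Submodule.Quotient.nontrivial_iff.mpr hN
    exact hC.moduleSocle_ne_bot (hsing.quotient N)
  · intro h M _ _ _ _ hsing
    let e : (M ⧸ (⊥ : Submodule R M)) ≃ₗ[R] M := Submodule.quotEquivOfEqBot ⊥ rfl
    exact moduleSocle_ne_bot_of_injective e.toLinearMap e.injective (h M hsing ⊥ bot_ne_top)
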